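/- arXiv:2304.00393 — 2 statements merged into one kernel-verified Lean document; each statement's English description precedes it below -/
import Mathlib

section
/- Let (X, μ) be a σ-finite measure space, j : X × X → [0,∞) a measurable symmetric kernel, and let F be a linear space of measurable functions on X on which the jump form E(u, v) = ∫∫ (u(x) − u(y))(v(x) − v(y)) j(x,y) dμ dμ is finite and defines an inner product making F a real Hilbert space. Let V ⊆ X be measurable and F(V) = {u ∈ F : u = 0 μ-a.e. on X∖V}, assumed to be a closed subspace, and assume F is stable under the operations u ↦ (u − a)⁺ and u ↦ −u⁻ for every a > 0. Let g ∈ F and h = g − proj_{F(V)}(g). Then ess sup_X |h| ≤ ess sup_{X∖V} |g|. -/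
/-!
Let `a` exceed the essential supremum of `|g|` off `V`. Then `η = (h - a)⁺` lies in `F` and
vanishes off `V`, so `E(h, η) = 0` by orthogonality. Since `t ↦ (t - a)⁺` is a monotone
contraction, `E(η, η) ≤ E(h, η) = 0`, hence `η = 0`, i.e. `h ≤ a` a.e. The same argument
applied to `-h` gives `-h ≤ a`.
-/

open MeasureTheory
open scoped ENNReal

lemma sq_sub_le_mul_sub_of_monotone_of_lipschitzWith {φ : ℝ → ℝ} (hmono : Monotone φ)
    (hlip : LipschitzWith 1 φ) (s t : ℝ) : (φ s - φ t) ^ 2 ≤ (s - t) * (φ s - φ t) := by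
  have hprod : 0 ≤ (s - t) * (φ s - φ t) := by
    rcases le_total s t with hst | hst
    · exact mul_nonneg_of_nonpos_of_nonpos (sub_nonpos.2 hst) (sub_nonpos.2 (hmono hst))
    · exact mul_nonneg (sub_nonneg.2 hst) (sub_nonneg.2 (hmono hst))
  have habs : |φ s - φ t| ≤ |s - t| := by simpa [Real.dist_eq] using hlip.dist_le_mul s t
  calc (φ s - φ t) ^ 2 = |φ s - φ t| * |φ s - φ t| := by rw [sq, abs_mul_abs_self]
    _ ≤ |s - t| * |φ s - φ t| := by gcongr
    _ = (s - t) * (φ s - φ t) := by rw [← abs_mul, abs_of_nonneg hprod]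

lemma monotone_posPart_sub_const (a : ℝ) : Monotone fun s : ℝ => max (s - a) 0 :=
  fun _ _ hst => max_le_max_right _ (sub_le_sub_right hst a)

lemma lipschitzWith_posPart_sub_const (a : ℝ) : LipschitzWith 1 fun s : ℝ => max (s - a) 0 :=
  (LipschitzWith.of_dist_le_mul fun s t => by simp).max_const 0

lemma essSup_le_of_forall_lt_ofReal {X : Type*} [MeasurableSpace X] {μ : Measure X}
    {f : X → ℝ≥0∞} {M : ℝ≥0∞}
    (hf : ∀ a : ℝ, M < ENNReal.ofReal a → ∀ᵐ x ∂μ, f x ≤ ENNReal.ofReal a) :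
    essSup f μ ≤ M := by
  by_contra! hlt
  obtain ⟨a, -, hMa, haf⟩ := ENNReal.lt_iff_exists_real_btwn.1 hlt
  exact (essSup_le_of_ae_le _ (hf a hMa)).not_gt haf

section JumpForm

variable {X : Type*} [MeasurableSpace X] {μ : Measure X} {j : X → X → ℝ}

noncomputable def jumpForm (μ : Measure X) (j : X → X → ℝ) (u v : X → ℝ) : ℝ :=
  ∫ p, (u p.1 - u p.2) * (v p.1 - v p.2) * j p.1 p.2 ∂(μ.prod μ)

lemma jumpForm_self (u : X → ℝ) :
    jumpForm μ j u u = ∫ p, (u p.1 - u p.2) ^ 2 * j p.1 p.2 ∂(μ.prod μ) := by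
  simp only [jumpForm, sq]

lemma jumpForm_self_nonneg (hj0 : ∀ x y, 0 ≤ j x y) (u : X → ℝ) : 0 ≤ jumpForm μ j u u :=
  integral_nonneg fun p => mul_nonneg (mul_self_nonneg _) (hj0 p.1 p.2)

lemma jumpForm_neg_left (u v : X → ℝ) : jumpForm μ j (-u) v = -jumpForm μ j u v := by
  simp only [jumpForm, Pi.neg_apply, ← integral_neg]
  congr 1 with p
  ring

lemma integrable_jumpForm_integrand (hj0 : ∀ x y, 0 ≤ j x y)
    (hjm : Measurable (Function.uncurry j)) {u v : X → ℝ} (hu : Measurable u)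
    (hv : Measurable v)
    (hEu : Integrable (fun p : X × X => (u p.1 - u p.2) ^ 2 * j p.1 p.2) (μ.prod μ))
    (hEv : Integrable (fun p : X × X => (v p.1 - v p.2) ^ 2 * j p.1 p.2) (μ.prod μ)) :
    Integrable (fun p : X × X => (u p.1 - u p.2) * (v p.1 - v p.2) * j p.1 p.2) (μ.prod μ) := by
  have hjm' : Measurable fun p : X × X => j p.1 p.2 := hjm
  refine (hEu.add hEv).mono' (by fun_prop) (ae_of_all _ fun p => ?_)
  set s := u p.1 - u p.2
  set t := v p.1 - v p.2
  have hst : |s * t| ≤ s ^ 2 + t ^ 2 := by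
    rw [abs_mul]
    nlinarith [two_mul_le_add_sq |s| |t|, sq_abs s, sq_abs t, abs_nonneg s, abs_nonneg t]
  calc ‖s * t * j p.1 p.2‖ = |s * t| * j p.1 p.2 := by
        rw [Real.norm_eq_abs, abs_mul, abs_of_nonneg (hj0 p.1 p.2)]
    _ ≤ (s ^ 2 + t ^ 2) * j p.1 p.2 := by gcongr; exact hj0 p.1 p.2
    _ = s ^ 2 * j p.1 p.2 + t ^ 2 * j p.1 p.2 := add_mul _ _ _

lemma jumpForm_comp_le (hj0 : ∀ x y, 0 ≤ j x y) {φ : ℝ → ℝ} (hmono : Monotone φ)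
    (hlip : LipschitzWith 1 φ) {u : X → ℝ}
    (hcross : Integrable (fun p : X × X => (u p.1 - u p.2) * (φ (u p.1) - φ (u p.2)) *
      j p.1 p.2) (μ.prod μ))
    (hEφu : Integrable (fun p : X × X => (φ (u p.1) - φ (u p.2)) ^ 2 * j p.1 p.2) (μ.prod μ)) :
    jumpForm μ j (φ ∘ u) (φ ∘ u) ≤ jumpForm μ j u (φ ∘ u) := by
  rw [jumpForm_self]
  exact integral_mono hEφu hcross fun p => mul_le_mul_of_nonneg_right
    (sq_sub_le_mul_sub_of_monotone_of_lipschitzWith hmono hlip _ _) (hj0 p.1 p.2)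

theorem ae_le_of_jumpForm_orthogonal (hj0 : ∀ x y, 0 ≤ j x y)
    (hjm : Measurable (Function.uncurry j)) (F : Submodule ℝ (X → ℝ))
    (hFmeas : ∀ u ∈ F, Measurable u)
    (hFint : ∀ u ∈ F,
      Integrable (fun p : X × X => (u p.1 - u p.2) ^ 2 * j p.1 p.2) (μ.prod μ))
    (hFdef : ∀ u ∈ F,
      ∫ p, (u p.1 - u p.2) ^ 2 * j p.1 p.2 ∂(μ.prod μ) = 0 → u =ᵐ[μ] 0)
    {V : Set X} {u : X → ℝ} (hu : u ∈ F) {a : ℝ} (hηF : (fun x => max (u x - a) 0) ∈ F)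
    (hua : ∀ᵐ x ∂μ.restrict Vᶜ, u x ≤ a)
    (horth : ∀ η ∈ F, (∀ᵐ x ∂μ.restrict Vᶜ, η x = 0) → jumpForm μ j u η = 0) :
    ∀ᵐ x ∂μ, u x ≤ a := by
  set η : X → ℝ := fun x => max (u x - a) 0
  have hηV : ∀ᵐ x ∂μ.restrict Vᶜ, η x = 0 :=
    hua.mono fun x hx => max_eq_right (sub_nonpos.2 hx)
  have hEη : jumpForm μ j η η = 0 := by
    refine le_antisymm ?_ (jumpForm_self_nonneg hj0 η)
    calc jumpForm μ j η η ≤ jumpForm μ j u η :=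
          jumpForm_comp_le hj0 (monotone_posPart_sub_const a)
            (lipschitzWith_posPart_sub_const a)
            (integrable_jumpForm_integrand hj0 hjm (hFmeas u hu) (hFmeas η hηF)
              (hFint u hu) (hFint η hηF))
            (hFint η hηF)
      _ = 0 := horth η hηF hηV
  filter_upwards [hFdef η hηF ((jumpForm_self η).symm.trans hEη)] with x hx
  exact sub_nonpos.1 ((le_max_left _ _).trans_eq hx)

end JumpForm

theorem stmt12_general {X : Type*} [MeasurableSpace X] (μ : Measure X)
    (j : X → X → ℝ) (hj0 : ∀ x y, 0 ≤ j x y)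
    (hjm : Measurable (Function.uncurry j))
    (F : Submodule ℝ (X → ℝ))
    (hFmeas : ∀ u ∈ F, Measurable u)
    (hFint : ∀ u ∈ F,
      Integrable (fun p : X × X => (u p.1 - u p.2) ^ 2 * j p.1 p.2) (μ.prod μ))
    (hFdef : ∀ u ∈ F,
      ∫ p, (u p.1 - u p.2) ^ 2 * j p.1 p.2 ∂(μ.prod μ) = 0 → u =ᵐ[μ] 0)
    (hFstab : ∀ a : ℝ, 0 < a → ∀ u ∈ F,
      (fun x => max (u x - a) 0) ∈ F ∧ (fun x => -max (-(u x)) 0) ∈ F)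
    (V : Set X)
    (g h : X → ℝ) (hh : h ∈ F)
    (hgh : ∀ᵐ x ∂μ.restrict Vᶜ, g x = h x)
    (horth : ∀ η ∈ F, (∀ᵐ x ∂μ.restrict Vᶜ, η x = 0) →
      ∫ p, (h p.1 - h p.2) * (η p.1 - η p.2) * j p.1 p.2 ∂(μ.prod μ) = 0) :
    essSup (fun x => ENNReal.ofReal |h x|) μ ≤
      essSup (fun x => ENNReal.ofReal |g x|) (μ.restrict Vᶜ) := by
  refine essSup_le_of_forall_lt_ofReal fun a ha => ?_
  have ha0 : 0 < a := ENNReal.ofReal_pos.1 (pos_of_gt ha)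
  have hha : ∀ᵐ x ∂μ.restrict Vᶜ, |h x| ≤ a := by
    filter_upwards [ae_lt_of_essSup_lt ha, hgh] with x hx hgx
    exact hgx ▸ ((ENNReal.ofReal_lt_ofReal_iff ha0).1 hx).le
  have hnh : -h ∈ F := F.neg_mem hh
  have hup := ae_le_of_jumpForm_orthogonal hj0 hjm F hFmeas hFint hFdef hh
    (hFstab a ha0 h hh).1 (hha.mono fun x hx => (abs_le.1 hx).2) horth
  have hlow := ae_le_of_jumpForm_orthogonal hj0 hjm F hFmeas hFint hFdef hnh
    (hFstab a ha0 _ hnh).1 (hha.mono fun x hx => neg_le.1 (abs_le.1 hx).1)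
    fun η hη hηV => by rw [jumpForm_neg_left]; exact neg_eq_zero.2 (horth η hη hηV)
  filter_upwards [hup, hlow] with x hx hnx
  exact ENNReal.ofReal_le_ofReal (abs_le.2 ⟨neg_le.1 hnx, hx⟩)

/-- Maximum principle for the harmonic part of the orthogonal projection in a jump-form
Hilbert space: if `h` is the harmonic part of `g` relative to `F(V)` (i.e. `g - h`
vanishes a.e. off `V` and `h` is `E`-orthogonal to all members of `F` vanishing a.e.
off `V`), then `ess sup_X |h| ≤ ess sup_{X∖V} |g|`. -/
theorem stmt12 {X : Type*} [MeasurableSpace X] (μ : Measure X) [SigmaFinite μ]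
    (j : X → X → ℝ) (hj0 : ∀ x y, 0 ≤ j x y) (hjsym : ∀ x y, j x y = j y x)
    (hjm : Measurable (Function.uncurry j))
    (F : Submodule ℝ (X → ℝ))
    (hFmeas : ∀ u ∈ F, Measurable u)
    (hFint : ∀ u ∈ F,
      Integrable (fun p : X × X => (u p.1 - u p.2) ^ 2 * j p.1 p.2) (μ.prod μ))
    (hFdef : ∀ u ∈ F,
      ∫ p, (u p.1 - u p.2) ^ 2 * j p.1 p.2 ∂(μ.prod μ) = 0 → u =ᵐ[μ] 0)
    (hFstab : ∀ a : ℝ, 0 < a → ∀ u ∈ F,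
      (fun x => max (u x - a) 0) ∈ F ∧ (fun x => -max (-(u x)) 0) ∈ F)
    (V : Set X) (hV : MeasurableSet V)
    (g h : X → ℝ) (hg : g ∈ F) (hh : h ∈ F)
    (hgh : ∀ᵐ x ∂μ.restrict Vᶜ, g x = h x)
    (horth : ∀ η ∈ F, (∀ᵐ x ∂μ.restrict Vᶜ, η x = 0) →
      ∫ p, (h p.1 - h p.2) * (η p.1 - η p.2) * j p.1 p.2 ∂(μ.prod μ) = 0) :
    essSup (fun x => ENNReal.ofReal |h x|) μ ≤
      essSup (fun x => ENNReal.ofReal |g x|) (μ.restrict Vᶜ) :=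
  stmt12_general μ j hj0 hjm F hFmeas hFint hFdef hFstab V g h hh hgh horth
end

section
/- In the setting of the jump-form Hilbert space (F, E) with closed subspace F(V) as above, if g ∈ F satisfies g ≥ 0 μ-a.e. on X∖V, then the harmonic part h = g − proj_{F(V)}(g) satisfies h ≥ 0 μ-a.e. on X. -/
/-!
Let `η = min h 0 = -h⁻`. Off `V` we have `h = g ≥ 0`, so `η` vanishes there and is an admissible
test function: `E(h, η) = 0`. Pointwise `(η x - η y)² ≤ (h x - h y)(η x - η y)`, hence
`E(η, η) ≤ E(h, η) = 0`, so `E(η, η) = 0`, and definiteness of `E` forces `η = 0`, i.e. `h ≥ 0` a.e.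
-/

open MeasureTheory

lemma neg_max_neg_zero (a : ℝ) : -max (-a) 0 = min a 0 := by
  rw [← neg_zero, max_neg_neg, neg_neg, neg_zero]

lemma sq_min_zero_sub_le_mul (x y : ℝ) :
    (min x 0 - min y 0) ^ 2 ≤ (x - y) * (min x 0 - min y 0) := by
  rcases le_total x 0 with hx | hx <;> rcases le_total y 0 with hy | hy <;>
    simp only [min_eq_left, min_eq_right, hx, hy] <;> nlinarith

section JumpForm

variable {X : Type*} [MeasurableSpace X] {ν : Measure (X × X)} {j : X → X → ℝ}

lemma integrable_jump_mul (hj0 : ∀ x y, 0 ≤ j x y) (hjm : Measurable (Function.uncurry j))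
    {u v : X → ℝ} (hu : Measurable u) (hv : Measurable v)
    (hu2 : Integrable (fun p : X × X => (u p.1 - u p.2) ^ 2 * j p.1 p.2) ν)
    (hv2 : Integrable (fun p : X × X => (v p.1 - v p.2) ^ 2 * j p.1 p.2) ν) :
    Integrable (fun p : X × X => (u p.1 - u p.2) * (v p.1 - v p.2) * j p.1 p.2) ν := by
  have hmeas : Measurable fun p : X × X => (u p.1 - u p.2) * (v p.1 - v p.2) * j p.1 p.2 :=
    (((hu.comp measurable_fst).sub (hu.comp measurable_snd)).mul
      ((hv.comp measurable_fst).sub (hv.comp measurable_snd))).mul hjm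
  refine ((hu2.add hv2).div_const 2).mono' hmeas.aestronglyMeasurable
    (Filter.Eventually.of_forall fun p => ?_)
  have hj := hj0 p.1 p.2
  set a := u p.1 - u p.2
  set b := v p.1 - v p.2
  have hab : |a * b| ≤ (a ^ 2 + b ^ 2) / 2 := by
    rw [abs_le]
    constructor <;> nlinarith [sq_nonneg (a + b), sq_nonneg (a - b)]
  calc ‖a * b * j p.1 p.2‖ = |a * b| * j p.1 p.2 := by
        rw [Real.norm_eq_abs, abs_mul, abs_of_nonneg hj]
    _ ≤ (a ^ 2 + b ^ 2) / 2 * j p.1 p.2 := mul_le_mul_of_nonneg_right hab hj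
    _ = (a ^ 2 * j p.1 p.2 + b ^ 2 * j p.1 p.2) / 2 := by ring

/-- The jump-form version of `E(u⁺, u⁻) ≤ 0`. -/
lemma integral_jump_sq_min_zero_le (hj0 : ∀ x y, 0 ≤ j x y)
    {u : X → ℝ}
    (hmin2 : Integrable (fun p : X × X => (min (u p.1) 0 - min (u p.2) 0) ^ 2 * j p.1 p.2) ν)
    (hcross : Integrable
      (fun p : X × X => (u p.1 - u p.2) * (min (u p.1) 0 - min (u p.2) 0) * j p.1 p.2) ν) :
    ∫ p, (min (u p.1) 0 - min (u p.2) 0) ^ 2 * j p.1 p.2 ∂ν ≤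
      ∫ p, (u p.1 - u p.2) * (min (u p.1) 0 - min (u p.2) 0) * j p.1 p.2 ∂ν :=
  integral_mono hmin2 hcross fun p =>
    mul_le_mul_of_nonneg_right (sq_min_zero_sub_le_mul _ _) (hj0 p.1 p.2)

end JumpForm

theorem stmt13_general {X : Type*} [MeasurableSpace X] (μ : Measure X)
    (j : X → X → ℝ) (hj0 : ∀ x y, 0 ≤ j x y)
    (hjm : Measurable (Function.uncurry j))
    (F : Submodule ℝ (X → ℝ))
    (hFmeas : ∀ u ∈ F, Measurable u)
    (hFint : ∀ u ∈ F,
      Integrable (fun p : X × X => (u p.1 - u p.2) ^ 2 * j p.1 p.2) (μ.prod μ))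
    (hFdef : ∀ u ∈ F,
      ∫ p, (u p.1 - u p.2) ^ 2 * j p.1 p.2 ∂(μ.prod μ) = 0 → u =ᵐ[μ] 0)
    (hFstab : ∀ u ∈ F, (fun x => -max (-(u x)) 0) ∈ F)
    (V : Set X)
    (g h : X → ℝ) (hh : h ∈ F)
    (hgpos : ∀ᵐ x ∂μ.restrict Vᶜ, 0 ≤ g x)
    (hgh : ∀ᵐ x ∂μ.restrict Vᶜ, g x = h x)
    (horth : ∀ η ∈ F, (∀ᵐ x ∂μ.restrict Vᶜ, η x = 0) →
      ∫ p, (h p.1 - h p.2) * (η p.1 - η p.2) * j p.1 p.2 ∂(μ.prod μ) = 0) :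
    ∀ᵐ x ∂μ, 0 ≤ h x := by
  have hηF : (fun x => min (h x) 0) ∈ F := by simpa only [neg_max_neg_zero] using hFstab h hh
  have hη_off : ∀ᵐ x ∂μ.restrict Vᶜ, min (h x) 0 = 0 := by
    filter_upwards [hgpos, hgh] with x hgx hghx
    exact min_eq_right (hghx ▸ hgx)
  have hcross := integrable_jump_mul hj0 hjm (hFmeas h hh) (hFmeas _ hηF) (hFint h hh)
    (hFint _ hηF)
  have henergy : ∫ p, (min (h p.1) 0 - min (h p.2) 0) ^ 2 * j p.1 p.2 ∂(μ.prod μ) = 0 :=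
    le_antisymm
      ((integral_jump_sq_min_zero_le hj0 (hFint _ hηF) hcross).trans (horth _ hηF hη_off).le)
      (integral_nonneg fun p => mul_nonneg (sq_nonneg _) (hj0 p.1 p.2))
  filter_upwards [hFdef _ hηF henergy] with x hx
  exact min_eq_right_iff.mp hx

/-- Positivity preservation of the harmonic projection in a jump-form Hilbert space:
if `g ≥ 0` a.e. off `V` and `h` is the harmonic part of `g` relative to `F(V)`
(i.e. `g - h` vanishes a.e. off `V` and `h` is `E`-orthogonal to all members of `F`
vanishing a.e. off `V`), then `h ≥ 0` a.e. on `X`. -/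
theorem stmt13 {X : Type*} [MeasurableSpace X] (μ : Measure X) [SigmaFinite μ]
    (j : X → X → ℝ) (hj0 : ∀ x y, 0 ≤ j x y) (hjsym : ∀ x y, j x y = j y x)
    (hjm : Measurable (Function.uncurry j))
    (F : Submodule ℝ (X → ℝ))
    (hFmeas : ∀ u ∈ F, Measurable u)
    (hFint : ∀ u ∈ F,
      Integrable (fun p : X × X => (u p.1 - u p.2) ^ 2 * j p.1 p.2) (μ.prod μ))
    (hFdef : ∀ u ∈ F,
      ∫ p, (u p.1 - u p.2) ^ 2 * j p.1 p.2 ∂(μ.prod μ) = 0 → u =ᵐ[μ] 0)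
    (hFstab : ∀ u ∈ F, (fun x => -max (-(u x)) 0) ∈ F)
    (V : Set X) (hV : MeasurableSet V)
    (g h : X → ℝ) (hg : g ∈ F) (hh : h ∈ F)
    (hgpos : ∀ᵐ x ∂μ.restrict Vᶜ, 0 ≤ g x)
    (hgh : ∀ᵐ x ∂μ.restrict Vᶜ, g x = h x)
    (horth : ∀ η ∈ F, (∀ᵐ x ∂μ.restrict Vᶜ, η x = 0) →
      ∫ p, (h p.1 - h p.2) * (η p.1 - η p.2) * j p.1 p.2 ∂(μ.prod μ) = 0) :
    ∀ᵐ x ∂μ, 0 ≤ h x :=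
  stmt13_general μ j hj0 hjm F hFmeas hFint hFdef hFstab V g h hh hgpos hgh horth
end
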